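/- For the Jordan quiver (one vertex, one loop) over the finite field F_q, the identity Σ_{n≥0} q^{n^2} X^n / Π_{i=0}^{n-1}(q^n - q^i) = (Σ_{n≥0} q^{n^2-n} X^n / Π_{i=0}^{n-1}(q^n - q^i)) · (Σ_{n≥0} X^n) holds in the formal power series ring Q[[X]]. -/
import Mathlib


/-- the Hall-algebra factorization identity for the Jordan quiver,
as an identity of formal power series over `ℚ`. -/
theorem jordan_quiver_identity (q : ℚ)
    (hq : ∃ p n : ℕ, p.Prime ∧ 0 < n ∧ q = (p : ℚ) ^ n) :
    (PowerSeries.mk fun n : ℕ =>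
        q ^ (n ^ 2) / ∏ i ∈ Finset.range n, (q ^ n - q ^ i)) =
      (PowerSeries.mk fun n : ℕ =>
        q ^ (n ^ 2 - n) / ∏ i ∈ Finset.range n, (q ^ n - q ^ i)) *
      (PowerSeries.mk fun _ : ℕ => (1 : ℚ)) := by
  obtain ⟨p, m, hp, hm, rfl⟩ := hq
  set q : ℚ := (p : ℚ) ^ m with hqdef
  have hq1 : 1 < q := one_lt_pow₀ (by exact_mod_cast hp.one_lt) hm.ne'
  have hq0 : (0:ℚ) < q := lt_trans one_pos hq1
  have hD : ∀ n : ℕ, ∏ i ∈ Finset.range n, (q ^ n - q ^ i) ≠ 0 := by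
    intro n
    refine Finset.prod_ne_zero_iff.mpr fun i hi => ?_
    have : q ^ i < q ^ n := pow_lt_pow_right₀ hq1 (Finset.mem_range.mp hi)
    linarith
  ext n
  rw [PowerSeries.coeff_mul]
  simp only [PowerSeries.coeff_mk, mul_one]
  rw [Finset.Nat.sum_antidiagonal_eq_sum_range_succ_mk]
  induction n with
  | zero => simp
  | succ n ih =>
    rw [Finset.sum_range_succ, ← ih]
    have hsub : (n+1)^2 - (n+1) = n^2 + n := by
      have : (n+1)^2 = n^2 + n + (n+1) := by ring
      omega
    have hexp : (n+1)^2 = n^2 + 2*n + 1 := by ring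
    have hDrec : ∏ i ∈ Finset.range (n+1), (q ^ (n+1) - q ^ i)
        = (q ^ n * ∏ i ∈ Finset.range n, (q ^ n - q ^ i)) * (q^(n+1) - 1) := by
      rw [Finset.prod_range_succ']
      congr 1
      have h : ∀ k ∈ Finset.range n, q^(n+1) - q^(k+1) = q * (q^n - q^k) := by
        intro k _
        ring
      rw [Finset.prod_congr rfl h, Finset.prod_mul_distrib, Finset.prod_const,
        Finset.card_range]
    have h1 : q ^ (n+1) - 1 ≠ 0 := by
      have : 1 < q ^ (n+1) := one_lt_pow₀ hq1 (Nat.succ_ne_zero n)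
      linarith
    rw [hsub, hexp, hDrec]
    have hDn := hD n
    field_simp
    ring
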